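/- The error in the quadratic approximation of the maximal game length satisfies n²/2 − M(n) = Θ(n·log_φ(n)): there exist constants c₁, c₂ > 0 and N such that for all n ≥ N, c₁·n·log_φ(n) ≤ n²/2 − M(n) ≤ c₂·n·log_φ(n), where φ = (1+√5)/2 is the golden ratio. -/

import Mathlib

/-!
Since `f` starts at `n (n + 1) / 2` and drops by at least one per move, a play with final state
`T` has `n (n + 1) / 2 - f T - E` moves, where the excess `E` is the sum of `drop - 1` over its
moves.

Every completed play has `E ≳ n log n`: with the weight `w x = min x K - 3`, the potential
`Σ w(x) F(x) + 12 f` drops by at least `12` per move, because a merge or split at level `i`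
lifts `O(F i)` of value by a bounded number of levels while its drop exceeds one by `≳ F i`.
A terminal state is a Zeckendorf representation, so all but less than `F K` of its value sits at
levels `≥ K`; for `2 F K ≤ n` its weighted value is therefore `≳ (K - 3) n`, with `K ≈ log n`.

Some play has `E + f T ≲ n log n`: keep the ones in front of a strictly increasing tail, merge
the two front ones, carry the resulting `2` past the other ones and cascade it into the tail by
splits. The excess of each of these moves is at most the increase of `Σ x F(x)`, so `E` is at
most the final value of `Σ x F(x)`, which is at most `(K - 1) n` when `n < F K`, since then every
entry is below `K`. The play stops with at most one `1` in front of such a tail, so it has fewer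
than `K` entries and `f T ≤ (K - 1) n` as well.
-/

/-- Fibonacci numbers indexed so that `F 1 = 1`, `F 2 = 2`,
and `F (i+1) = F i + F (i-1)`. -/
def F (i : ℕ) : ℕ := Nat.fib (i + 1)

/-- A single legal move of the ordered Zeckendorf game, acting on an
adjacent pair of entries of the list of indices. -/
inductive Move : List ℕ → List ℕ → Prop
  | merge (a b : List ℕ) (i : ℕ) (hi : 1 ≤ i) :
      Move (a ++ [i, i + 1] ++ b) (a ++ [i + 2] ++ b)
  | mergeOnes (a b : List ℕ) :
      Move (a ++ [1, 1] ++ b) (a ++ [2] ++ b)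
  | split (a b : List ℕ) (i : ℕ) (hi : 2 < i) :
      Move (a ++ [i, i] ++ b) (a ++ [i - 2, i + 1] ++ b)
  | splitTwos (a b : List ℕ) :
      Move (a ++ [2, 2] ++ b) (a ++ [1, 3] ++ b)
  | switch (a b : List ℕ) (i j : ℕ) (hj : 1 ≤ j) (hij : j < i) :
      Move (a ++ [i, j] ++ b) (a ++ [j, i] ++ b)

/-- A play of the ordered Zeckendorf game on `n` with `m` moves:
the initial state is `n` copies of `1`, and each step is a legal move. -/
def IsPlay (n : ℕ) (s : ℕ → List ℕ) (m : ℕ) : Prop :=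
  s 0 = List.replicate n 1 ∧ ∀ t < m, Move (s t) (s (t + 1))

/-- A state is terminal if no legal move applies to it. -/
def Terminal (S : List ℕ) : Prop := ∀ T, ¬ Move S T

/-- The total Fibonacci value of a state. -/
def val (S : List ℕ) : ℕ := (S.map F).sum

/-- The monovariant `f(S) = Σ_{j=1}^k (k+1−j)·F_{i_j}` (here with
`j` running over 0-based positions, so the weight of position `j` is
`k − j`). -/
def f (S : List ℕ) : ℕ := ∑ j : Fin S.length, (S.length - (j : ℕ)) * F (S.get j)

/-- `M n` is the maximal number of moves in a completed play of the
ordered Zeckendorf game on `n`. -/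
noncomputable def M (n : ℕ) : ℕ :=
  sSup {m | ∃ s : ℕ → List ℕ, IsPlay n s m ∧ Terminal (s m)}

/-- The golden ratio `φ = (1+√5)/2`. -/
noncomputable def phi : ℝ := (1 + Real.sqrt 5) / 2

/-- Logarithm to base `φ`. -/
noncomputable def logphi (x : ℝ) : ℝ := Real.log x / Real.log phi

inductive Steps {α : Type*} (r : α → α → Prop) : α → α → ℕ → Prop
  | refl (a : α) : Steps r a a 0
  | head {a b c : α} {n : ℕ} : r a b → Steps r b c n → Steps r a c (n + 1)

namespace Steps

variable {α : Type*} {r : α → α → Prop} {a b c : α} {m n : ℕ}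

theorem trans (h₁ : Steps r a b m) (h₂ : Steps r b c n) : Steps r a c (m + n) := by
  induction h₁ with
  | refl => simpa using h₂
  | head hab _ ih => rw [Nat.add_right_comm]; exact head hab (ih h₂)

theorem map {β : Type*} {s : β → β → Prop} (g : α → β) (hg : ∀ a b, r a b → s (g a) (g b))
    (h : Steps r a b n) : Steps s (g a) (g b) n := by
  induction h with
  | refl => exact refl _
  | head hab _ ih => exact head (hg _ _ hab) ih

theorem mono {s : α → α → Prop} (hrs : ∀ a b, r a b → s a b) (h : Steps r a b n) :
    Steps s a b n :=
  h.map id hrs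

theorem invariant {P : α → Prop} (hP : ∀ a b, r a b → P a → P b) (h : Steps r a b n)
    (ha : P a) : P b := by
  induction h with
  | refl => exact ha
  | head hab _ ih => exact ih (hP _ _ hab ha)

section Potential

variable {β : Type*} [AddCommMonoid β] [PartialOrder β] [IsOrderedAddMonoid β]
  {Φ : α → β} {d : β}

theorem add_nsmul_le (hΦ : ∀ a b, r a b → Φ b + d ≤ Φ a) (h : Steps r a b n) :
    Φ b + n • d ≤ Φ a := by
  induction h with
  | refl => simp
  | @head a b c n hab _ ih =>
    calc Φ c + (n + 1) • d = (Φ c + n • d) + d := by rw [succ_nsmul, add_assoc]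
      _ ≤ Φ b + d := by gcongr
      _ ≤ Φ a := hΦ a b hab

theorem le_add_nsmul (hΦ : ∀ a b, r a b → Φ a ≤ Φ b + d) (h : Steps r a b n) :
    Φ a ≤ Φ b + n • d := by
  induction h with
  | refl => simp
  | @head a b c n hab _ ih =>
    calc Φ a ≤ Φ b + d := hΦ a b hab
      _ ≤ (Φ c + n • d) + d := by gcongr
      _ = Φ c + (n + 1) • d := by rw [succ_nsmul, add_assoc]

end Potential

theorem iff_exists_seq :
    Steps r a b n ↔ ∃ s : ℕ → α, s 0 = a ∧ s n = b ∧ ∀ t < n, r (s t) (s (t + 1)) := by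
  induction n generalizing a with
  | zero =>
    refine ⟨fun h => ?_, fun ⟨s, h0, hn, _⟩ => h0 ▸ hn ▸ refl _⟩
    cases h
    exact ⟨fun _ => b, rfl, rfl, by simp⟩
  | succ n ih =>
    constructor
    · rintro (_ | ⟨hab, h⟩)
      obtain ⟨s, h0, hn, hs⟩ := ih.1 h
      refine ⟨fun t => if t = 0 then a else s (t - 1), by simp, by simpa using hn, ?_⟩
      rintro (_ | t) ht
      · simpa [h0] using hab
      · simpa using hs t (by omega)
    · rintro ⟨s, h0, hn, hs⟩
      exact head (h0 ▸ hs 0 n.succ_pos) (ih.2 ⟨fun t => s (t + 1), rfl, hn,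
        fun t ht => hs (t + 1) (by omega)⟩)

end Steps

theorem F_add_two (i : ℕ) : F (i + 2) = F (i + 1) + F i := by
  simp only [F, show i + 2 + 1 = (i + 1) + 2 by omega, Nat.fib_add_two, add_comm]

@[simp] theorem F_one : F 1 = 1 := rfl

@[simp] theorem F_two : F 2 = 2 := rfl

@[simp] theorem F_three : F 3 = 3 := rfl

theorem F_pos (i : ℕ) : 0 < F i := Nat.fib_pos.2 i.succ_pos

theorem F_mono : Monotone F := fun _ _ h => Nat.fib_mono (by omega)

theorem F_lt_F_iff {i j : ℕ} (hi : 1 ≤ i) : F i < F j ↔ i < j :=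
  (Nat.fib_lt_fib (by omega)).trans (by omega)

theorem F_le_two_pow : ∀ i, F i ≤ 2 ^ i
  | 0 => le_rfl
  | 1 => by decide
  | i + 2 => by
    have h₀ := F_le_two_pow i
    have h₁ := F_le_two_pow (i + 1)
    rw [pow_succ] at h₁
    rw [F_add_two, pow_succ, pow_succ]
    omega

theorem two_pow_le_F_two_mul : ∀ m, 2 ^ m ≤ F (2 * m)
  | 0 => le_rfl
  | m + 1 => by
    have := two_pow_le_F_two_mul m
    have := F_mono (by omega : 2 * m ≤ 2 * m + 1)
    rw [Nat.mul_succ, F_add_two, pow_succ]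
    omega

@[simp] theorem val_nil : val [] = 0 := rfl

@[simp] theorem val_cons (x : ℕ) (S : List ℕ) : val (x :: S) = F x + val S := by
  simp [val]

@[simp] theorem val_append (S T : List ℕ) : val (S ++ T) = val S + val T := by
  simp [val]

@[simp] theorem val_reverse (S : List ℕ) : val S.reverse = val S := by
  simp [val, List.sum_reverse]

@[simp] theorem val_replicate_one (n : ℕ) : val (List.replicate n 1) = n := by
  simp [val, F]

theorem F_le_val {x : ℕ} {S : List ℕ} (hx : x ∈ S) : F x ≤ val S :=
  List.le_sum_of_mem (List.mem_map_of_mem hx)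

@[simp] theorem f_nil : f [] = 0 := rfl

@[simp] theorem f_cons (x : ℕ) (S : List ℕ) : f (x :: S) = (S.length + 1) * F x + f S := by
  simp only [f, List.length_cons, Fin.sum_univ_succ, Fin.val_zero, Nat.sub_zero,
    List.get_eq_getElem, Fin.val_succ, List.getElem_cons_zero, List.getElem_cons_succ]
  congr 1
  exact Finset.sum_congr rfl fun j _ => by congr 1; omega

theorem f_append (S T : List ℕ) : f (S ++ T) = f S + T.length * val S + f T := by
  induction S with
  | nil => simp
  | cons x S ih => simp only [List.cons_append, f_cons, ih, List.length_append, val_cons]; ring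

theorem f_append_append (a p b : List ℕ) :
    f (a ++ p ++ b) = f a + (p.length + b.length) * val a + f p + b.length * val p + f b := by
  simp only [f_append, val_append]; ring

theorem val_le_f (S : List ℕ) : val S ≤ f S := by
  induction S with
  | nil => simp
  | cons x S ih => simp only [val_cons, f_cons]; nlinarith

theorem f_le_length_mul_val (S : List ℕ) : f S ≤ S.length * val S := by
  induction S with
  | nil => simp
  | cons x S ih => simp only [val_cons, f_cons, List.length_cons]; nlinarith

theorem two_mul_f_replicate_one (n : ℕ) : 2 * f (List.replicate n 1) = n * (n + 1) := by
  induction n with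
  | zero => simp
  | succ n ih => simp only [List.replicate_succ, f_cons, List.length_replicate, F_one]; linarith

inductive PairMove : List ℕ → List ℕ → Prop
  | merge (i : ℕ) (hi : 1 ≤ i) : PairMove [i, i + 1] [i + 2]
  | mergeOnes : PairMove [1, 1] [2]
  | split (k : ℕ) : PairMove [k + 3, k + 3] [k + 1, k + 4]
  | splitTwos : PairMove [2, 2] [1, 3]
  | switch (i j : ℕ) (hj : 1 ≤ j) (hij : j < i) : PairMove [i, j] [j, i]

theorem move_iff {S T : List ℕ} :
    Move S T ↔ ∃ a b p q, PairMove p q ∧ S = a ++ p ++ b ∧ T = a ++ q ++ b := by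
  constructor
  · intro h
    cases h with
    | merge a b i hi => exact ⟨a, b, _, _, .merge i hi, rfl, rfl⟩
    | mergeOnes a b => exact ⟨a, b, _, _, .mergeOnes, rfl, rfl⟩
    | split a b i hi =>
      obtain ⟨k, rfl⟩ : ∃ k, i = k + 3 := ⟨i - 3, by omega⟩
      exact ⟨a, b, _, _, .split k, rfl, rfl⟩
    | splitTwos a b => exact ⟨a, b, _, _, .splitTwos, rfl, rfl⟩
    | switch a b i j hj hij => exact ⟨a, b, _, _, .switch i j hj hij, rfl, rfl⟩
  · rintro ⟨a, b, p, q, hpq, rfl, rfl⟩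
    cases hpq with
    | merge i hi => exact .merge a b i hi
    | mergeOnes => exact .mergeOnes a b
    | split k => exact .split a b (k + 3) (by omega)
    | splitTwos => exact .splitTwos a b
    | switch i j hj hij => exact .switch a b i j hj hij

theorem Move.append_append {S T : List ℕ} (h : Move S T) (u v : List ℕ) :
    Move (u ++ S ++ v) (u ++ T ++ v) := by
  obtain ⟨a, b, p, q, hpq, rfl, rfl⟩ := move_iff.1 h
  exact move_iff.2 ⟨u ++ a, b ++ v, p, q, hpq, by simp, by simp⟩

namespace PairMove

variable {p q : List ℕ}

theorem val_eq (h : PairMove p q) : val p = val q := by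
  cases h with
  | merge i hi => simp [F_add_two i, add_comm]
  | split k =>
    simp only [val_cons, val_nil]
    have : F (k + 3) = F (k + 2) + F (k + 1) := F_add_two (k + 1)
    have : F (k + 4) = F (k + 3) + F (k + 2) := F_add_two (k + 2)
    omega
  | switch => simp [add_comm]
  | _ => simp

theorem length_le (h : PairMove p q) : q.length ≤ p.length := by
  cases h <;> simp

theorem pos (h : PairMove p q) : ∀ x ∈ q, 1 ≤ x := by
  cases h <;> simp only [List.mem_cons, List.not_mem_nil, or_false] <;> omega

theorem f_lt (h : PairMove p q) : f q < f p := by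
  cases h with
  | merge i hi =>
    have := F_pos i
    simp only [f_cons, f_nil, List.length_cons, List.length_nil, F_add_two i]
    omega
  | split k =>
    simp only [f_cons, f_nil, List.length_cons, List.length_nil]
    have : F (k + 3) = F (k + 2) + F (k + 1) := F_add_two (k + 1)
    have : F (k + 4) = F (k + 3) + F (k + 2) := F_add_two (k + 2)
    have := F_pos (k + 2)
    omega
  | switch i j hj hij =>
    have := (F_lt_F_iff hj).2 hij
    simp only [f_cons, f_nil, List.length_cons, List.length_nil]
    omega
  | _ => simp

end PairMove

theorem f_append_append_add_le {a b p q : List ℕ} (hv : val p = val q)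
    (hl : q.length ≤ p.length) : f (a ++ q ++ b) + f p ≤ f (a ++ p ++ b) + f q := by
  rw [f_append_append, f_append_append, hv]
  nlinarith

theorem f_append_append_add_eq {a b p q : List ℕ} (hv : val p = val q)
    (hl : p.length = q.length) : f (a ++ q ++ b) + f p = f (a ++ p ++ b) + f q := by
  rw [f_append_append, f_append_append, hv, hl]
  ring

namespace Move

variable {S T : List ℕ}

theorem val_eq (h : Move S T) : val S = val T := by
  obtain ⟨a, b, p, q, hpq, rfl, rfl⟩ := move_iff.1 h
  simp [hpq.val_eq]

theorem f_lt (h : Move S T) : f T < f S := by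
  obtain ⟨a, b, p, q, hpq, rfl, rfl⟩ := move_iff.1 h
  have := f_append_append_add_le (a := a) (b := b) hpq.val_eq hpq.length_le
  have := hpq.f_lt
  omega

theorem pos (h : Move S T) (hS : ∀ x ∈ S, 1 ≤ x) : ∀ x ∈ T, 1 ≤ x := by
  obtain ⟨a, b, p, q, hpq, rfl, rfl⟩ := move_iff.1 h
  simp only [List.mem_append] at hS ⊢
  rintro x ((hx | hx) | hx)
  exacts [hS x (.inl (.inl hx)), hpq.pos x hx, hS x (.inr hx)]

end Move

theorem exists_steps_terminal (S : List ℕ) : ∃ T m, Steps Move S T m ∧ Terminal T := by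
  induction S using (measure f).wf.induction with
  | _ S ih =>
    by_cases hS : Terminal S
    · exact ⟨S, 0, .refl S, hS⟩
    · obtain ⟨S', hSS'⟩ := not_forall_not.1 hS
      obtain ⟨T, m, hS'T, hT⟩ := ih S' hSS'.f_lt
      exact ⟨T, m + 1, .head hSS' hS'T, hT⟩

def completedLengths (n : ℕ) : Set ℕ := {m | ∃ s : ℕ → List ℕ, IsPlay n s m ∧ Terminal (s m)}

theorem mem_completedLengths_iff {n m : ℕ} :
    m ∈ completedLengths n ↔ ∃ T, Steps Move (List.replicate n 1) T m ∧ Terminal T := by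
  simp only [completedLengths, IsPlay, Steps.iff_exists_seq]
  constructor
  · rintro ⟨s, ⟨h0, hs⟩, hT⟩
    exact ⟨s m, ⟨s, h0, rfl, hs⟩, hT⟩
  · rintro ⟨T, ⟨s, h0, rfl, hs⟩, hT⟩
    exact ⟨s, ⟨h0, hs⟩, hT⟩

theorem completedLengths_nonempty (n : ℕ) : (completedLengths n).Nonempty := by
  obtain ⟨T, m, h, hT⟩ := exists_steps_terminal (List.replicate n 1)
  exact ⟨m, mem_completedLengths_iff.2 ⟨T, h, hT⟩⟩

theorem Steps.add_le_f {S T : List ℕ} {m : ℕ} (h : Steps Move S T m) : f T + m ≤ f S := by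
  simpa [mul_comm] using h.add_nsmul_le (Φ := f) (d := 1) fun _ _ h => h.f_lt

theorem bddAbove_completedLengths (n : ℕ) : BddAbove (completedLengths n) := by
  refine ⟨f (List.replicate n 1), fun m hm => ?_⟩
  obtain ⟨T, h, -⟩ := mem_completedLengths_iff.1 hm
  have := h.add_le_f
  omega

theorem M_mem_completedLengths (n : ℕ) : M n ∈ completedLengths n :=
  Nat.sSup_mem (completedLengths_nonempty n) (bddAbove_completedLengths n)

theorem le_M_of_mem {n m : ℕ} (hm : m ∈ completedLengths n) : m ≤ M n :=
  le_csSup (bddAbove_completedLengths n) hm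

def weightedVal (w : ℕ → ℕ) (S : List ℕ) : ℕ := (S.map fun x => w x * F x).sum

@[simp] theorem weightedVal_nil (w : ℕ → ℕ) : weightedVal w [] = 0 := rfl

@[simp] theorem weightedVal_cons (w : ℕ → ℕ) (x : ℕ) (S : List ℕ) :
    weightedVal w (x :: S) = w x * F x + weightedVal w S := by
  simp [weightedVal]

@[simp] theorem weightedVal_append (w : ℕ → ℕ) (S T : List ℕ) :
    weightedVal w (S ++ T) = weightedVal w S + weightedVal w T := by
  simp [weightedVal]

@[simp] theorem weightedVal_reverse (w : ℕ → ℕ) (S : List ℕ) :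
    weightedVal w S.reverse = weightedVal w S := by
  simp [weightedVal, List.sum_reverse]

theorem F_succ_le_two_mul {i : ℕ} (hi : 1 ≤ i) : F (i + 1) ≤ 2 * F i := by
  obtain ⟨k, rfl⟩ : ∃ k, i = k + 1 := ⟨i - 1, by omega⟩
  have := F_mono (by omega : k ≤ k + 1)
  rw [F_add_two]
  omega

theorem PairMove.weightedVal_add_le {w : ℕ → ℕ} (hmono : Monotone w)
    (hlip : ∀ x, w (x + 1) ≤ w x + 1) (hw3 : w 3 = 0) {p q : List ℕ} (h : PairMove p q) :
    weightedVal w q + 12 * (f q + 1) ≤ weightedVal w p + 12 * f p := by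
  have hw1 : w 1 = 0 := Nat.eq_zero_of_le_zero (hw3 ▸ hmono (by norm_num))
  have hw2 : w 2 = 0 := Nat.eq_zero_of_le_zero (hw3 ▸ hmono (by norm_num))
  cases h with
  | merge i hi =>
    simp only [weightedVal_cons, weightedVal_nil, f_cons, f_nil, List.length_cons,
      List.length_nil, F_add_two i]
    rcases hi.eq_or_lt with rfl | hi
    · simp [hw3]
    have h₀ : w (i + 2) * F i ≤ (w i + 2) * F i :=
      Nat.mul_le_mul_right _ ((hlip (i + 1)).trans (by have := hlip i; omega))
    have h₁ : w (i + 2) * F (i + 1) ≤ (w (i + 1) + 1) * F (i + 1) := Nat.mul_le_mul_right _ (hlip _)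
    have := F_succ_le_two_mul (by omega : 1 ≤ i)
    have : 2 ≤ F i := F_mono hi
    nlinarith
  | split k =>
    simp only [weightedVal_cons, weightedVal_nil, f_cons, f_nil, List.length_cons,
      List.length_nil]
    have : F (k + 3) = F (k + 2) + F (k + 1) := F_add_two (k + 1)
    have : F (k + 4) = F (k + 3) + F (k + 2) := F_add_two (k + 2)
    have h₁ : w (k + 1) * F (k + 1) ≤ w (k + 3) * F (k + 1) :=
      Nat.mul_le_mul_right _ (hmono (by omega))
    have h₄ : w (k + 4) * F (k + 4) ≤ (w (k + 3) + 1) * F (k + 4) :=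
      Nat.mul_le_mul_right _ (hlip _)
    have hsum : w (k + 3) * F (k + 1) + w (k + 3) * F (k + 4) = 2 * (w (k + 3) * F (k + 3)) := by
      rw [← mul_add, mul_left_comm]
      congr 2
      omega
    have : 2 ≤ F (k + 2) := F_mono (by omega : 2 ≤ k + 2)
    have : F (k + 1) ≤ F (k + 2) := F_mono (by omega)
    linarith
  | switch i j hj hij =>
    have := (F_lt_F_iff hj).2 hij
    simp only [weightedVal_cons, weightedVal_nil, f_cons, f_nil, List.length_cons,
      List.length_nil]
    omega
  | _ => simp [hw1, hw2, hw3]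

theorem Move.weightedVal_add_le {w : ℕ → ℕ} (hmono : Monotone w)
    (hlip : ∀ x, w (x + 1) ≤ w x + 1) (hw3 : w 3 = 0) {S T : List ℕ} (h : Move S T) :
    weightedVal w T + 12 * (f T + 1) ≤ weightedVal w S + 12 * f S := by
  obtain ⟨a, b, p, q, hpq, rfl, rfl⟩ := move_iff.1 h
  have := f_append_append_add_le (a := a) (b := b) hpq.val_eq hpq.length_le
  have := hpq.weightedVal_add_le hmono hlip hw3
  simp only [weightedVal_append]
  omega

theorem exists_pairMove {x y : ℕ} (hx : 1 ≤ x) (hy : 1 ≤ y) (hxy : y < x + 2) :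
    ∃ q, PairMove [x, y] q := by
  rcases Nat.lt_trichotomy y x with hlt | rfl | hgt
  · exact ⟨_, .switch x y hy hlt⟩
  · obtain rfl | rfl | ⟨k, rfl⟩ : y = 1 ∨ y = 2 ∨ ∃ k, y = k + 3 := by
      rcases (by omega : y = 1 ∨ y = 2 ∨ 3 ≤ y) with h | h | h
      exacts [.inl h, .inr (.inl h), .inr (.inr ⟨y - 3, by omega⟩)]
    exacts [⟨_, .mergeOnes⟩, ⟨_, .splitTwos⟩, ⟨_, .split k⟩]
  · obtain rfl : y = x + 1 := by omega
    exact ⟨_, .merge x hx⟩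

theorem Terminal.isChain {S : List ℕ} (hT : Terminal S) (hS : ∀ x ∈ S, 1 ≤ x) :
    S.IsChain (fun x y => x + 2 ≤ y) := by
  refine List.isChain_iff_forall_rel_of_append_cons_cons.2 fun x y a b hab => ?_
  by_contra hxy
  subst hab
  obtain ⟨q, hq⟩ := exists_pairMove (hS x (by simp)) (hS y (by simp)) (by omega)
  exact hT _ (move_iff.2 ⟨a, b, _, q, hq, by simp, rfl⟩)

theorem Terminal.isZeckendorfRep {S : List ℕ} (hT : Terminal S) (hS : ∀ x ∈ S, 1 ≤ x) :
    (S.reverse.map (· + 1)).IsZeckendorfRep := by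
  have hchain : (0 :: S.map (· + 1)).IsChain (fun a b => a + 2 ≤ b) := by
    refine List.isChain_cons.2 ⟨fun y hy => ?_, (List.isChain_map _).2 ?_⟩
    · cases S with
      | nil => simp at hy
      | cons x S =>
        simp only [List.map_cons, List.head?_cons, Option.mem_def, Option.some.injEq] at hy
        have := hS x (by simp)
        omega
    · exact (hT.isChain hS).imp fun a b hab => by omega
  simpa [List.IsZeckendorfRep, ← List.map_reverse, List.isChain_reverse] using
    List.isChain_reverse.2 hchain

theorem val_lt_F_of_isZeckendorfRep {D : List ℕ} (hD : (D.map (· + 1)).IsZeckendorfRep)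
    {k : ℕ} (hk : ∀ x ∈ D.head?, x < k) : val D < F k := by
  have := hD.sum_fib_lt (n := k + 1) (by cases D <;> simp_all)
  rwa [List.map_map] at this

theorem sub_three_mul_le_weightedVal (K : ℕ) {D : List ℕ}
    (hD : (D.map (· + 1)).IsZeckendorfRep) :
    (K - 3) * (val D + 1) ≤ weightedVal (fun x => min x K - 3) D + (K - 3) * F K := by
  induction D with
  | nil =>
    have := Nat.mul_le_mul_left (K - 3) (F_pos K)
    simp only [val_nil, weightedVal_nil]
    omega
  | cons y D ih =>
    rcases lt_or_ge y K with hy | hy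
    · have := val_lt_F_of_isZeckendorfRep hD (k := K) (by simpa using hy)
      nlinarith
    · have hD' : (D.map (· + 1)).IsZeckendorfRep := by
        simpa [List.IsZeckendorfRep] using List.IsChain.tail hD
      simp only [val_cons, weightedVal_cons, min_eq_right hy]
      nlinarith [ih hD']

theorem M_le_of_two_mul_F_le {n K : ℕ} (hK : 2 * F K ≤ n) : 24 * M n + (K - 3) * n ≤ 12 * n ^ 2 := by
  obtain ⟨T, h, hT⟩ := mem_completedLengths_iff.1 (M_mem_completedLengths n)
  set w : ℕ → ℕ := fun x => min x K - 3
  have hstep (S S' : List ℕ) (hS : Move S S') :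
      weightedVal w S' + 12 * f S' + 12 ≤ weightedVal w S + 12 * f S := by
    have := hS.weightedVal_add_le (w := w) (fun _ _ hxy => by simp only [w]; omega)
      (fun _ => by simp only [w]; omega) (by simp [w])
    omega
  have hpot := h.add_nsmul_le hstep
  have hval : val T = n :=
    h.invariant (P := fun S => val S = n) (fun _ _ hS hv => hS.val_eq.symm.trans hv) (by simp)
  have hpos : ∀ x ∈ T, 1 ≤ x := h.invariant (fun _ _ h hS => h.pos hS)
    (fun x hx => (List.eq_of_mem_replicate hx).ge)
  have hlevel : (K - 3) * (n + 1) ≤ weightedVal w T + (K - 3) * F K := by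
    simpa [hval] using sub_three_mul_le_weightedVal K (hT.isZeckendorfRep hpos)
  have h₀ : weightedVal w (List.replicate n 1) = 0 := by simp [weightedVal, w]
  have := two_mul_f_replicate_one n
  have := val_le_f T
  have := Nat.mul_le_mul_left (K - 3) hK
  simp only [h₀, smul_eq_mul] at hpot
  nlinarith

def CheapMove (S T : List ℕ) : Prop :=
  Move S T ∧ f S + weightedVal id S ≤ f T + weightedVal id T + 1

def SameLenCheapMove (S T : List ℕ) : Prop := CheapMove S T ∧ S.length = T.length

theorem CheapMove.append_right {S T : List ℕ} (h : CheapMove S T) (v : List ℕ) :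
    CheapMove (S ++ v) (T ++ v) := by
  refine ⟨by simpa using h.1.append_append [] v, ?_⟩
  have hv := h.1.val_eq
  have := h.2
  simp only [f_append, weightedVal_append, hv]
  omega

theorem SameLenCheapMove.append_append {S T : List ℕ} (h : SameLenCheapMove S T)
    (u v : List ℕ) : SameLenCheapMove (u ++ S ++ v) (u ++ T ++ v) := by
  refine ⟨⟨h.1.1.append_append u v, ?_⟩, by simp [h.2]⟩
  have := f_append_append_add_eq (a := u) (b := v) h.1.1.val_eq h.2
  have := h.1.2
  simp only [weightedVal_append]
  omega

theorem cheapMove_mergeOnes : CheapMove [1, 1] [2] :=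
  ⟨move_iff.2 ⟨[], [], _, _, .mergeOnes, rfl, rfl⟩, by simp⟩

theorem sameLenCheapMove_switch : SameLenCheapMove [2, 1] [1, 2] :=
  ⟨⟨move_iff.2 ⟨[], [], _, _, .switch 2 1 le_rfl one_lt_two, rfl, rfl⟩, by simp⟩, rfl⟩

theorem sameLenCheapMove_splitTwos : SameLenCheapMove [2, 2] [1, 3] :=
  ⟨⟨move_iff.2 ⟨[], [], _, _, .splitTwos, rfl, rfl⟩, by simp⟩, rfl⟩

theorem sameLenCheapMove_split (k : ℕ) : SameLenCheapMove [k + 3, k + 3] [k + 1, k + 4] := by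
  refine ⟨⟨move_iff.2 ⟨[], [], _, _, .split k, rfl, rfl⟩, ?_⟩, rfl⟩
  simp only [f_cons, f_nil, weightedVal_cons, weightedVal_nil, List.length_cons, List.length_nil,
    id]
  have : F (k + 3) = F (k + 2) + F (k + 1) := F_add_two (k + 1)
  have : F (k + 4) = F (k + 3) + F (k + 2) := F_add_two (k + 2)
  have : F (k + 1) ≤ F (k + 2) := F_mono (by omega)
  have : k * F (k + 1) + k * F (k + 4) = 2 * (k * F (k + 3)) := by
    rw [← mul_add, mul_left_comm]
    congr 2
    omega
  nlinarith

theorem steps_transport (q : ℕ) :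
    Steps SameLenCheapMove (2 :: List.replicate q 1) (List.replicate q 1 ++ [2]) q := by
  induction q with
  | zero => exact .refl _
  | succ q ih =>
    exact .head (by simpa [List.replicate_succ] using
        sameLenCheapMove_switch.append_append [] (List.replicate q 1))
      (ih.map (1 :: ·) fun _ _ h => by simpa using h.append_append [1] [])

theorem steps_cascade (t : List ℕ) (x : ℕ) (hx : 2 ≤ x) (ht : t.Pairwise (· < ·))
    (hxt : ∀ y ∈ t, x ≤ y) :
    ∃ e t' m, Steps SameLenCheapMove (x :: t) (List.replicate e 1 ++ t') m ∧
      t'.Pairwise (· < ·) ∧ (∀ y ∈ t', 2 ≤ y ∧ x - 2 ≤ y) ∧ (4 ≤ x → e = 0) := by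
  induction t generalizing x with
  | nil => exact ⟨0, [x], 0, .refl _, by simp, by simp; omega, fun _ => rfl⟩
  | cons y t ih =>
    rw [List.pairwise_cons] at ht
    obtain hxy | rfl := (hxt y (by simp)).lt_or_eq
    · have hlt : ∀ z ∈ y :: t, x < z := by
        simpa using ⟨hxy, fun z hz => hxy.trans (ht.1 z hz)⟩
      refine ⟨0, x :: y :: t, 0, .refl _, List.pairwise_cons.2 ⟨hlt, List.pairwise_cons.2 ht⟩,
        fun z hz => ?_, fun _ => rfl⟩
      rcases List.mem_cons.1 hz with rfl | hz
      · omega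
      · have := hlt z hz; omega
    obtain rfl | ⟨k, rfl⟩ : x = 2 ∨ ∃ k, x = k + 3 := by
      rcases (by omega : x = 2 ∨ 3 ≤ x) with h | h
      exacts [.inl h, .inr ⟨x - 3, by omega⟩]
    · obtain ⟨e, t', m, h, ht', hlow, -⟩ := ih 3 (by omega) ht.2 fun z hz => ht.1 z hz
      refine ⟨e + 1, t', m + 1, .head ?_ (h.map (1 :: ·) fun _ _ h => ?_), ht', ?_, by omega⟩
      · simpa using sameLenCheapMove_splitTwos.append_append [] t
      · simpa using h.append_append [1] []
      · exact fun z hz => ⟨(hlow z hz).1, Nat.zero_le _⟩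
    · obtain ⟨e, t', m, h, ht', hlow, he⟩ := ih (k + 4) (by omega) ht.2 fun z hz => ht.1 z hz
      obtain rfl := he (by omega)
      have hsteps : Steps SameLenCheapMove ((k + 3) :: (k + 3) :: t) ((k + 1) :: t') (m + 1) :=
        .head (by simpa using (sameLenCheapMove_split k).append_append [] t)
          (h.map ((k + 1) :: ·) fun _ _ h => by simpa using h.append_append [k + 1] [])
      rcases k.eq_zero_or_pos with rfl | hk
      · exact ⟨1, t', m + 1, hsteps, ht', fun z hz => ⟨(hlow z hz).1, by have := hlow z hz; omega⟩,
          by omega⟩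
      · refine ⟨0, (k + 1) :: t', m + 1, hsteps, ?_, ?_, fun _ => rfl⟩
        · exact List.pairwise_cons.2 ⟨fun z hz => by have := hlow z hz; omega, ht'⟩
        · simp only [List.mem_cons]
          rintro z (rfl | hz)
          · omega
          · have := hlow z hz; omega

theorem steps_round (a : ℕ) {t : List ℕ} (ht : t.Pairwise (· < ·)) (ht₂ : ∀ y ∈ t, 2 ≤ y) :
    ∃ e t' m, Steps CheapMove (List.replicate (a + 2) 1 ++ t) (List.replicate (a + e) 1 ++ t')
      (m + 1) ∧ t'.Pairwise (· < ·) ∧ ∀ y ∈ t', 2 ≤ y := by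
  obtain ⟨e, t', m, hcascade, ht', hlow, -⟩ := steps_cascade t 2 le_rfl ht ht₂
  have htransport : Steps SameLenCheapMove (2 :: List.replicate a 1 ++ t)
      (List.replicate a 1 ++ 2 :: t) a := by
    simpa using (steps_transport a).map (· ++ t) fun _ _ h => by simpa using h.append_append [] t
  have hcascade' : Steps SameLenCheapMove (List.replicate a 1 ++ 2 :: t)
      (List.replicate (a + e) 1 ++ t') m := by
    rw [List.replicate_add, List.append_assoc]
    exact hcascade.map (List.replicate a 1 ++ ·) fun _ _ h => by
      simpa using h.append_append (List.replicate a 1) []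
  exact ⟨e, t', a + m, .head (cheapMove_mergeOnes.append_right _)
    ((htransport.trans hcascade').mono fun _ _ h => h.1), ht', fun y hy => (hlow y hy).1⟩

theorem exists_cheap_steps_to_stop (a : ℕ) {t : List ℕ} (ht : t.Pairwise (· < ·))
    (ht₂ : ∀ y ∈ t, 2 ≤ y) :
    ∃ e t' m, e ≤ 1 ∧ Steps CheapMove (List.replicate a 1 ++ t) (List.replicate e 1 ++ t') m ∧
      t'.Pairwise (· < ·) ∧ ∀ y ∈ t', 2 ≤ y := by
  induction hf : f (List.replicate a 1 ++ t) using Nat.strong_induction_on generalizing a t with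
  | _ N ih =>
    obtain ha | ⟨a, rfl⟩ : a ≤ 1 ∨ ∃ a', a = a' + 2 := by
      rcases le_or_gt a 1 with h | h
      exacts [.inl h, .inr ⟨a - 2, by omega⟩]
    · exact ⟨a, t, 0, ha, .refl _, ht, ht₂⟩
    obtain ⟨e, t', m, h, ht', ht'₂⟩ := steps_round a ht ht₂
    have := (h.mono fun _ _ h => h.1).add_le_f
    obtain ⟨e', t'', m', he', h', ht'', ht''₂⟩ := ih _ (by omega) (a + e) ht' ht'₂ rfl
    exact ⟨e', t'', m + 1 + m', he', h.trans h', ht'', ht''₂⟩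

theorem length_le_of_pairwise_lt {l : List ℕ} (hl : l.Pairwise (· < ·)) {a b : ℕ}
    (hab : ∀ x ∈ l, a ≤ x ∧ x < b) : l.length ≤ b - a := by
  classical
  have hsub : l.toFinset ⊆ Finset.Ico a b := fun x hx => by
    simpa using hab x (List.mem_toFinset.1 hx)
  simpa [List.toFinset_card_of_nodup hl.nodup] using Finset.card_le_card hsub

theorem weightedVal_le_mul_val {w : ℕ → ℕ} {c : ℕ} {S : List ℕ} (hw : ∀ x ∈ S, w x ≤ c) :
    weightedVal w S ≤ c * val S := by
  induction S with
  | nil => simp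
  | cons x S ih =>
    simp only [List.mem_cons, forall_eq_or_imp] at hw
    simp only [weightedVal_cons, val_cons, mul_add]
    exact add_le_add (Nat.mul_le_mul_right _ hw.1) (ih hw.2)

theorem f_add_weightedVal_id_le {e K : ℕ} {t : List ℕ} (he : e ≤ 1) (ht : t.Pairwise (· < ·))
    (ht₂ : ∀ y ∈ t, 2 ≤ y) (hK : val (List.replicate e 1 ++ t) < F K) :
    f (List.replicate e 1 ++ t) + weightedVal id (List.replicate e 1 ++ t) ≤
      2 * (K - 1) * val (List.replicate e 1 ++ t) := by
  set S := List.replicate e 1 ++ t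
  have hlt : ∀ y ∈ S, y < K := fun y hy => by
    by_contra! hy'
    exact (F_le_val hy).not_gt (hK.trans_le (F_mono hy'))
  have hlen : t.length ≤ K - 2 := length_le_of_pairwise_lt ht fun y hy =>
    ⟨ht₂ y hy, hlt y (by simp [S, hy])⟩
  have hS : S.length ≤ K - 1 := by
    have : e = 1 → 1 < K := fun he₁ => hlt 1 (by simp [S, he₁])
    simp only [S, List.length_append, List.length_replicate]
    omega
  have hf := f_le_length_mul_val S
  have := Nat.mul_le_mul_right (val S) hS
  have := weightedVal_le_mul_val (w := id) (c := K - 1) fun y hy => Nat.le_sub_one_of_lt (hlt y hy)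
  nlinarith

theorem sq_le_M_of_lt_F {n K : ℕ} (hK : n < F K) : n ^ 2 ≤ 2 * M n + 4 * K * n := by
  obtain ⟨e, t, m, he, h, ht, ht₂⟩ := exists_cheap_steps_to_stop n List.Pairwise.nil
    (by simp : ∀ y ∈ ([] : List ℕ), 2 ≤ y)
  rw [List.append_nil] at h
  have hcount := h.le_add_nsmul (Φ := fun S => f S + weightedVal id S) (d := 1) fun _ _ h => h.2
  have hmove := h.mono fun _ _ h => h.1
  have hval : val (List.replicate e 1 ++ t) = n :=
    hmove.invariant (P := fun S => val S = n) (fun _ _ hS hv => hS.val_eq.symm.trans hv) (by simp)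
  have hstop := f_add_weightedVal_id_le he ht ht₂ (hval ▸ hK)
  obtain ⟨T, m', h', hT⟩ := exists_steps_terminal (List.replicate e 1 ++ t)
  have hM := le_M_of_mem (mem_completedLengths_iff.2 ⟨T, hmove.trans h', hT⟩)
  have := two_mul_f_replicate_one n
  have : weightedVal id (List.replicate n 1) = n := by simp [weightedVal]
  have := Nat.mul_le_mul_right n (Nat.sub_le K 1)
  simp only [smul_eq_mul, mul_one] at hcount
  rw [hval] at hstop
  nlinarith

theorem nat_log_sub_four_mul_le_sub_M {n : ℕ} (hL : 4 ≤ Nat.log 2 n) :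
    ((Nat.log 2 n : ℝ) - 4) * n / 24 ≤ (n : ℝ) ^ 2 / 2 - M n := by
  have hn : n ≠ 0 := fun h => by simp [h] at hL
  have hF : 2 * F (Nat.log 2 n - 1) ≤ n := calc
    2 * F (Nat.log 2 n - 1) ≤ 2 * 2 ^ (Nat.log 2 n - 1) := by gcongr; exact F_le_two_pow _
    _ = 2 ^ Nat.log 2 n := by rw [← pow_succ']; congr 1; omega
    _ ≤ n := Nat.pow_log_le_self 2 hn
  have h := M_le_of_two_mul_F_le hF
  rw [show Nat.log 2 n - 1 - 3 = Nat.log 2 n - 4 by omega] at h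
  have h' : ((24 * M n + (Nat.log 2 n - 4) * n : ℕ) : ℝ) ≤ ((12 * n ^ 2 : ℕ) : ℝ) := by
    exact_mod_cast h
  push_cast [Nat.cast_sub hL] at h'
  linarith

theorem sub_M_le_nat_log (n : ℕ) :
    (n : ℝ) ^ 2 / 2 - M n ≤ 4 * ((Nat.log 2 n : ℝ) + 1) * n := by
  have hF : n < F (2 * (Nat.log 2 n + 1)) :=
    (Nat.lt_pow_succ_log_self one_lt_two n).trans_le (two_pow_le_F_two_mul _)
  have h : ((n ^ 2 : ℕ) : ℝ) ≤ ((2 * M n + 4 * (2 * (Nat.log 2 n + 1)) * n : ℕ) : ℝ) :=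
    by exact_mod_cast sq_le_M_of_lt_F hF
  push_cast at h
  linarith

theorem phi_eq_goldenRatio : phi = Real.goldenRatio := rfl

theorem nat_log_two_le_logphi {n : ℕ} (hn : n ≠ 0) : (Nat.log 2 n : ℝ) ≤ logphi n := by
  rw [logphi, ← Real.logb, phi_eq_goldenRatio,
    Real.le_logb_iff_rpow_le Real.one_lt_goldenRatio (by positivity), Real.rpow_natCast]
  calc Real.goldenRatio ^ Nat.log 2 n ≤ 2 ^ Nat.log 2 n := by
        gcongr
        exact Real.goldenRatio_lt_two.le
    _ ≤ n := by exact_mod_cast Nat.pow_log_le_self 2 hn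

theorem logphi_lt_two_mul_nat_log_add_two {n : ℕ} (hn : n ≠ 0) :
    logphi n < 2 * Nat.log 2 n + 2 := by
  rw [logphi, ← Real.logb, phi_eq_goldenRatio,
    Real.logb_lt_iff_lt_rpow Real.one_lt_goldenRatio (by positivity), show (2 * Nat.log 2 n + 2 : ℝ) = ((2 * (Nat.log 2 n + 1) : ℕ) : ℝ) by push_cast; ring,
    Real.rpow_natCast, pow_mul]
  calc (n : ℝ) < 2 ^ (Nat.log 2 n + 1) := by exact_mod_cast Nat.lt_pow_succ_log_self one_lt_two n
    _ ≤ (Real.goldenRatio ^ 2) ^ (Nat.log 2 n + 1) := by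
        gcongr
        rw [Real.goldenRatio_sq]
        linarith [Real.one_lt_goldenRatio]

theorem stmt_18 :
    ∃ c₁ c₂ : ℝ, 0 < c₁ ∧ 0 < c₂ ∧ ∃ N : ℕ, ∀ n : ℕ, N ≤ n →
      c₁ * n * logphi n ≤ (n : ℝ) ^ 2 / 2 - (M n : ℝ) ∧
      (n : ℝ) ^ 2 / 2 - (M n : ℝ) ≤ c₂ * n * logphi n := by
  refine ⟨1 / 100, 5, by norm_num, by norm_num, 2 ^ 12, fun n hn => ?_⟩
  have hn₀ : n ≠ 0 := by omega
  have hL : 12 ≤ Nat.log 2 n := Nat.le_log_of_pow_le one_lt_two hn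
  have hL' : (12 : ℝ) ≤ Nat.log 2 n := by exact_mod_cast hL
  constructor
  · calc 1 / 100 * n * logphi n ≤ 1 / 100 * n * (2 * Nat.log 2 n + 2) := by
          gcongr; exact (logphi_lt_two_mul_nat_log_add_two hn₀).le
      _ ≤ ((Nat.log 2 n : ℝ) - 4) * n / 24 := by nlinarith [n.cast_nonneg (α := ℝ)]
      _ ≤ _ := nat_log_sub_four_mul_le_sub_M (by omega)
  · calc (n : ℝ) ^ 2 / 2 - M n ≤ 4 * ((Nat.log 2 n : ℝ) + 1) * n := sub_M_le_nat_log n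
      _ ≤ 5 * n * Nat.log 2 n := by nlinarith [n.cast_nonneg (α := ℝ)]
      _ ≤ 5 * n * logphi n := by gcongr; exact nat_log_two_le_logphi hn₀
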